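/- β-expansion with unit is an observational equivalence: for any closed box-free term Σ;·;· ⊢_i M : T, the term (λx.M)() is contextually equivalent to M; more strongly, for any closed term N and heap h, (N[(λx.M)()/z], h) terminates if and only if (N[M/z], h) terminates, where z is a variable standing for the plugged-in occurrences. -/

import Mathlib

/-! Core syntax of LMML -/

abbrev LVar := String
abbrev GVar := String
abbrev Loc := Nat

inductive Ty : Type where
  | unit : Ty
  | int : Ty
  | arrow : Ty → Ty → Ty
  | ref : Ty → Ty
  | box : List (LVar × Ty) → Ty → Ty

abbrev LCtx := List (LVar × Ty)
abbrev GCtx := List (GVar × (LCtx × Ty))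
abbrev SCtx := List (Loc × Ty)

def lookup {κ α : Type} [BEq κ] (l : List (κ × α)) (k : κ) : Option α :=
  (l.find? (fun p => p.1 == k)).map (·.2)

inductive Tm : Type where
  | unit : Tm
  | int : Int → Tm
  | lvar : LVar → Tm
  | gvar : GVar → List (LVar × Tm) → Tm
  | loc : Loc → Tm
  | lam : LVar → Tm → Tm
  | app : Tm → Tm → Tm
  | rec' : LVar → LVar → Tm → Tm
  | arith : (Int → Int → Int) → Tm → Tm → Tm
  | ite : Tm → Tm → Tm → Tm
  | ref : Tm → Tm
  | deref : Tm → Tm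
  | assign : Tm → Tm → Tm
  | box : Tm → Tm
  | letbox : GVar → Tm → Tm → Tm

inductive IsValue : Tm → Prop where
  | unit : IsValue .unit
  | int {n} : IsValue (.int n)
  | loc {l} : IsValue (.loc l)
  | lvar {x} : IsValue (.lvar x)
  | lam {x M} : IsValue (.lam x M)
  | rec' {f x M} : IsValue (.rec' f x M)
  | box {M} : IsValue (.box M)

def eraseKey {α : Type} (x : String) (l : List (String × α)) : List (String × α) :=
  l.filter (fun p => p.1 ≠ x)

/-! Local substitution (values substituted for local variables; `box` binds
    all local variables; explicit substitutions on global variables compose). -/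
mutual
def Tm.lsubst : Tm → List (LVar × Tm) → Tm
  | .unit, _ => .unit
  | .int n, _ => .int n
  | .lvar x, δ => (lookup δ x).getD (.lvar x)
  | .gvar u δ0, δ => .gvar u (lsubstList δ0 δ)
  | .loc l, _ => .loc l
  | .lam x M, δ => .lam x (M.lsubst (eraseKey x δ))
  | .app M N, δ => .app (M.lsubst δ) (N.lsubst δ)
  | .rec' f x M, δ => .rec' f x (M.lsubst (eraseKey x (eraseKey f δ)))
  | .arith op M N, δ => .arith op (M.lsubst δ) (N.lsubst δ)
  | .ite M N P, δ => .ite (M.lsubst δ) (N.lsubst δ) (P.lsubst δ)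
  | .ref M, δ => .ref (M.lsubst δ)
  | .deref M, δ => .deref (M.lsubst δ)
  | .assign M N, δ => .assign (M.lsubst δ) (N.lsubst δ)
  | .box M, _ => .box M
  | .letbox u M N, δ => .letbox u (M.lsubst δ) (N.lsubst δ)

def lsubstList : List (LVar × Tm) → List (LVar × Tm) → List (LVar × Tm)
  | [], _ => []
  | (x, V) :: rest, δ => (x, V.lsubst δ) :: lsubstList rest δ
end

/-! Global (call-by-name) substitution. -/
mutual
def Tm.gsubst : Tm → List (GVar × Tm) → Tm
  | .unit, _ => .unit
  | .int n, _ => .int n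
  | .lvar x, _ => .lvar x
  | .gvar u δ0, σ =>
      match lookup σ u with
      | some M0 => M0.lsubst (gsubstList δ0 σ)
      | none => .gvar u (gsubstList δ0 σ)
  | .loc l, _ => .loc l
  | .lam x M, σ => .lam x (M.gsubst σ)
  | .app M N, σ => .app (M.gsubst σ) (N.gsubst σ)
  | .rec' f x M, σ => .rec' f x (M.gsubst σ)
  | .arith op M N, σ => .arith op (M.gsubst σ) (N.gsubst σ)
  | .ite M N P, σ => .ite (M.gsubst σ) (N.gsubst σ) (P.gsubst σ)
  | .ref M, σ => .ref (M.gsubst σ)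
  | .deref M, σ => .deref (M.gsubst σ)
  | .assign M N, σ => .assign (M.gsubst σ) (N.gsubst σ)
  | .box M, σ => .box (M.gsubst σ)
  | .letbox u M N, σ => .letbox u (M.gsubst σ) (N.gsubst (eraseKey u σ))

def gsubstList : List (LVar × Tm) → List (GVar × Tm) → List (LVar × Tm)
  | [], _ => []
  | (x, V) :: rest, σ => (x, V.gsubst σ) :: gsubstList rest σ
end

/-! Typing.  The layer index `i` ranges over {0,1}; the box rules are only
    available at layer 1. -/
mutual
inductive Typing : SCtx → GCtx → LCtx → Nat → Tm → Ty → Prop where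
  | unit {Sg Ps G i} : Typing Sg Ps G i .unit .unit
  | int {Sg Ps G i n} : Typing Sg Ps G i (.int n) .int
  | lvar {Sg Ps G i x T} : lookup G x = some T → Typing Sg Ps G i (.lvar x) T
  | gvar {Sg Ps G i u δ G' T} :
      lookup Ps u = some (G', T) → SubstTyping Sg Ps G i δ G' →
      Typing Sg Ps G i (.gvar u δ) T
  | loc {Sg Ps G i l T} : lookup Sg l = some T → Typing Sg Ps G i (.loc l) (.ref T)
  | lam {Sg Ps G i x M T1 T2} :
      Typing Sg Ps ((x, T1) :: G) i M T2 → Typing Sg Ps G i (.lam x M) (.arrow T1 T2)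
  | app {Sg Ps G i M1 M2 T1 T2} :
      Typing Sg Ps G i M1 (.arrow T1 T2) → Typing Sg Ps G i M2 T1 →
      Typing Sg Ps G i (.app M1 M2) T2
  | rec' {Sg Ps G i f x M T1 T2} :
      Typing Sg Ps ((x, T1) :: (f, .arrow T1 T2) :: G) i M T2 →
      Typing Sg Ps G i (.rec' f x M) (.arrow T1 T2)
  | arith {Sg Ps G i op M1 M2} :
      Typing Sg Ps G i M1 .int → Typing Sg Ps G i M2 .int →
      Typing Sg Ps G i (.arith op M1 M2) .int
  | ite {Sg Ps G i M1 M2 M3 T} :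
      Typing Sg Ps G i M1 .int → Typing Sg Ps G i M2 T → Typing Sg Ps G i M3 T →
      Typing Sg Ps G i (.ite M1 M2 M3) T
  | ref {Sg Ps G i M T} : Typing Sg Ps G i M T → Typing Sg Ps G i (.ref M) (.ref T)
  | deref {Sg Ps G i M T} : Typing Sg Ps G i M (.ref T) → Typing Sg Ps G i (.deref M) T
  | assign {Sg Ps G i M1 M2 T} :
      Typing Sg Ps G i M1 (.ref T) → Typing Sg Ps G i M2 T →
      Typing Sg Ps G i (.assign M1 M2) .unit
  | box {Sg Ps G G' M T} :
      Typing Sg Ps G' 0 M T → Typing Sg Ps G 1 (.box M) (.box G' T)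
  | letbox {Sg Ps G u M1 M2 G' T T'} :
      Typing Sg Ps G 1 M1 (.box G' T) →
      Typing Sg ((u, (G', T)) :: Ps) G 1 M2 T' →
      Typing Sg Ps G 1 (.letbox u M1 M2) T'

inductive SubstTyping : SCtx → GCtx → LCtx → Nat → List (LVar × Tm) → LCtx → Prop where
  | nil {Sg Ps G i} : SubstTyping Sg Ps G i [] []
  | cons {Sg Ps G i x V T δ G'} :
      Typing Sg Ps G i V T → IsValue V → SubstTyping Sg Ps G i δ G' →
      SubstTyping Sg Ps G i ((x, V) :: δ) ((x, T) :: G')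
end

/-- Typing of a global substitution: `Σ;Ψ ⊢ σ : Ψ'`. -/
def GSubstTyping (Sg : SCtx) (Ps : GCtx) (σ : List (GVar × Tm)) (Ps' : GCtx) : Prop :=
  (∀ u, (lookup Ps' u).isSome ↔ (lookup σ u).isSome) ∧
  (∀ u G' T, lookup Ps' u = some (G', T) →
    ∃ M, lookup σ u = some M ∧ Typing Sg Ps G' 0 M T)

/-! Heaps and operational semantics -/

abbrev Heap := Loc → Option Tm

def hupdate (h : Heap) (l : Loc) (V : Tm) : Heap :=
  fun l' => if l' = l then some V else h l'

/-- Well-typed heaps: `Σ;Ψ;Γ ⊢ h : heap`. -/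
def HeapTyped (Sg : SCtx) (Ps : GCtx) (G : LCtx) (h : Heap) : Prop :=
  (∀ l, (lookup Sg l).isSome ↔ (h l).isSome) ∧
  (∀ l T, lookup Sg l = some T →
    ∃ V, h l = some V ∧ IsValue V ∧ Typing Sg Ps G 1 V T)

/-- Store context extension. -/
def SCtxLe (Sg Sg' : SCtx) : Prop :=
  ∀ l T, lookup Sg l = some T → lookup Sg' l = some T

/-! Evaluation contexts -/

inductive ECtx : Type where
  | hole : ECtx
  | appL : ECtx → Tm → ECtx
  | appR : Tm → ECtx → ECtx
  | arithL : (Int → Int → Int) → ECtx → Tm → ECtx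
  | arithR : (Int → Int → Int) → Tm → ECtx → ECtx
  | ite : ECtx → Tm → Tm → ECtx
  | ref : ECtx → ECtx
  | deref : ECtx → ECtx
  | assignL : ECtx → Tm → ECtx
  | assignR : Tm → ECtx → ECtx
  | letboxL : GVar → ECtx → Tm → ECtx
  | letboxR : GVar → Tm → ECtx → ECtx

def ECtx.plug : ECtx → Tm → Tm
  | .hole, M => M
  | .appL K N, M => .app (K.plug M) N
  | .appR V K, M => .app V (K.plug M)
  | .arithL op K N, M => .arith op (K.plug M) N
  | .arithR op V K, M => .arith op V (K.plug M)
  | .ite K N P, M => .ite (K.plug M) N P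
  | .ref K, M => .ref (K.plug M)
  | .deref K, M => .deref (K.plug M)
  | .assignL K N, M => .assign (K.plug M) N
  | .assignR V K, M => .assign V (K.plug M)
  | .letboxL u K N, M => .letbox u (K.plug M) N
  | .letboxR u V K, M => .letbox u V (K.plug M)

inductive ECtxWf : ECtx → Prop where
  | hole : ECtxWf .hole
  | appL {K N} : ECtxWf K → ECtxWf (.appL K N)
  | appR {V K} : IsValue V → ECtxWf K → ECtxWf (.appR V K)
  | arithL {op K N} : ECtxWf K → ECtxWf (.arithL op K N)
  | arithR {op V K} : IsValue V → ECtxWf K → ECtxWf (.arithR op V K)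
  | ite {K N P} : ECtxWf K → ECtxWf (.ite K N P)
  | ref {K} : ECtxWf K → ECtxWf (.ref K)
  | deref {K} : ECtxWf K → ECtxWf (.deref K)
  | assignL {K N} : ECtxWf K → ECtxWf (.assignL K N)
  | assignR {V K} : IsValue V → ECtxWf K → ECtxWf (.assignR V K)
  | letboxL {u K N} : ECtxWf K → ECtxWf (.letboxL u K N)
  | letboxR {u V K} : IsValue V → ECtxWf K → ECtxWf (.letboxR u V K)

/-- Small-step operational semantics on (term, heap) pairs. -/
inductive Step : Tm × Heap → Tm × Heap → Prop where
  | beta {x M V h} : IsValue V →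
      Step (.app (.lam x M) V, h) (M.lsubst [(x, V)], h)
  | arith {op n m h} :
      Step (.arith op (.int n) (.int m), h) (.int (op n m), h)
  | iteT {n M N h} : n ≠ 0 → Step (.ite (.int n) M N, h) (M, h)
  | iteF {M N h} : Step (.ite (.int 0) M N, h) (N, h)
  | ref {V l h} : IsValue V → h l = none →
      Step (.ref V, h) (.loc l, hupdate h l V)
  | deref {l V h} : h l = some V → Step (.deref (.loc l), h) (V, h)
  | assign {l V h} : IsValue V → (h l).isSome →
      Step (.assign (.loc l) V, h) (.unit, hupdate h l V)
  | rec' {f x M V h} : IsValue V →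
      Step (.app (.rec' f x M) V, h) (M.lsubst [(x, V), (f, .rec' f x M)], h)
  | letbox {u M1 M2 h} :
      Step (.letbox u (.box M1) M2, h) (M2.gsubst [(u, M1)], h)
  | ktx {K M1 M2 h1 h2} : ECtxWf K → K ≠ .hole → Step (M1, h1) (M2, h2) →
      Step (K.plug M1, h1) (K.plug M2, h2)

abbrev StepStar : Tm × Heap → Tm × Heap → Prop := Relation.ReflTransGen Step

/-- `(M, h) ⇓` : termination. -/
def Terminates (c : Tm × Heap) : Prop :=
  ∃ V h', IsValue V ∧ StepStar c (V, h')

/-! Contexts and the CIU / contextual preorders -/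

/-- General program contexts with a single hole. -/
inductive Ctx : Type where
  | hole : Ctx
  | lam : LVar → Ctx → Ctx
  | appL : Ctx → Tm → Ctx
  | appR : Tm → Ctx → Ctx
  | rec' : LVar → LVar → Ctx → Ctx
  | arithL : (Int → Int → Int) → Ctx → Tm → Ctx
  | arithR : (Int → Int → Int) → Tm → Ctx → Ctx
  | ite1 : Ctx → Tm → Tm → Ctx
  | ite2 : Tm → Ctx → Tm → Ctx
  | ite3 : Tm → Tm → Ctx → Ctx
  | ref : Ctx → Ctx
  | deref : Ctx → Ctx
  | assignL : Ctx → Tm → Ctx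
  | assignR : Tm → Ctx → Ctx
  | box : Ctx → Ctx
  | letboxL : GVar → Ctx → Tm → Ctx
  | letboxR : GVar → Tm → Ctx → Ctx

def Ctx.plug : Ctx → Tm → Tm
  | .hole, M => M
  | .lam x C, M => .lam x (C.plug M)
  | .appL C N, M => .app (C.plug M) N
  | .appR N C, M => .app N (C.plug M)
  | .rec' f x C, M => .rec' f x (C.plug M)
  | .arithL op C N, M => .arith op (C.plug M) N
  | .arithR op N C, M => .arith op N (C.plug M)
  | .ite1 C N P, M => .ite (C.plug M) N P
  | .ite2 N C P, M => .ite N (C.plug M) P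
  | .ite3 N P C, M => .ite N P (C.plug M)
  | .ref C, M => .ref (C.plug M)
  | .deref C, M => .deref (C.plug M)
  | .assignL C N, M => .assign (C.plug M) N
  | .assignR N C, M => .assign N (C.plug M)
  | .box C, M => .box (C.plug M)
  | .letboxL u C N, M => .letbox u (C.plug M) N
  | .letboxR u N C, M => .letbox u N (C.plug M)

/-- A context typed `(Ψ;Γ;i;T) → (Ψ';Γ';i';T')`: it produces a well-typed
    term whenever a term of the hole type is plugged in. -/
def CtxTyped (Sg : SCtx) (C : Ctx) (Ps : GCtx) (G : LCtx) (i : Nat) (T : Ty)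
    (Ps' : GCtx) (G' : LCtx) (i' : Nat) (T' : Ty) : Prop :=
  ∀ N, Typing Sg Ps G i N T → Typing Sg Ps' G' i' (C.plug N) T'

/-- An evaluation context typed `(·;·;i;T) → (·;·;i';T')`. -/
def ECtxTyped (Sg : SCtx) (K : ECtx) (i : Nat) (T : Ty) (i' : Nat) (T' : Ty) : Prop :=
  ECtxWf K ∧ ∀ N, Typing Sg [] [] i N T → Typing Sg [] [] i' (K.plug N) T'

/-- Contextual preorder `M1 ≲ M2` for `Σ;Ψ;Γ ⊢_i M1, M2 : T`. -/
def CtxLe (Sg : SCtx) (Ps : GCtx) (G : LCtx) (i : Nat) (T : Ty) (M1 M2 : Tm) : Prop :=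
  ∀ (Sg' : SCtx) (C : Ctx) (i' : Nat) (T' : Ty) (h : Heap),
    SCtxLe Sg Sg' →
    CtxTyped Sg' C Ps G i T [] [] i' T' →
    HeapTyped Sg' [] [] h →
    Terminates (C.plug M1, h) → Terminates (C.plug M2, h)

/-- CIU preorder `M1 ≲^CIU M2` for `Σ;Ψ;Γ ⊢_i M1, M2 : T`: quantifies over
    closing global substitutions, closing local value substitutions,
    evaluation contexts and heaps. -/
def CIUle (Sg : SCtx) (Ps : GCtx) (G : LCtx) (i : Nat) (T : Ty) (M1 M2 : Tm) : Prop :=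
  ∀ (Sg' : SCtx) (σ : List (GVar × Tm)) (δ : List (LVar × Tm)) (K : ECtx)
    (h : Heap) (i' : Nat) (T' : Ty),
    SCtxLe Sg Sg' →
    GSubstTyping Sg' [] σ Ps →
    SubstTyping Sg' [] [] i δ G →
    ECtxTyped Sg' K i T i' T' →
    HeapTyped Sg' [] [] h →
    Terminates (K.plug ((M1.gsubst σ).lsubst δ), h) →
    Terminates (K.plug ((M2.gsubst σ).lsubst δ), h)

/-- Box-free terms (no occurrence of the `box` constructor). -/
inductive BoxFree : Tm → Prop where
  | unit : BoxFree .unit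
  | int {n} : BoxFree (.int n)
  | lvar {x} : BoxFree (.lvar x)
  | gvar {u δ} : (∀ p ∈ δ, BoxFree p.2) → BoxFree (.gvar u δ)
  | loc {l} : BoxFree (.loc l)
  | lam {x M} : BoxFree M → BoxFree (.lam x M)
  | app {M N} : BoxFree M → BoxFree N → BoxFree (.app M N)
  | rec' {f x M} : BoxFree M → BoxFree (.rec' f x M)
  | arith {op M N} : BoxFree M → BoxFree N → BoxFree (.arith op M N)
  | ite {M N P} : BoxFree M → BoxFree N → BoxFree P → BoxFree (.ite M N P)
  | ref {M} : BoxFree M → BoxFree (.ref M)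
  | deref {M} : BoxFree M → BoxFree (.deref M)
  | assign {M N} : BoxFree M → BoxFree N → BoxFree (.assign M N)
  | letbox {u M N} : BoxFree M → BoxFree N → BoxFree (.letbox u M N)

namespace BetaExpAux

/-! ### lookup / eraseKey lemmas -/

theorem lookup_nil {α : Type} (k : String) : lookup ([] : List (String × α)) k = none := rfl

theorem lookup_cons {α : Type} (k : String) (v : α) (l : List (String × α)) (k' : String) :
    lookup ((k, v) :: l) k' = if k = k' then some v else lookup l k' := by
  by_cases h : k = k' <;> simp [lookup, List.find?_cons, h]

theorem lookup_mem {α : Type} {l : List (String × α)} {k : String} {v : α}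
    (h : lookup l k = some v) : (k, v) ∈ l := by
  induction l with
  | nil => simp [lookup] at h
  | cons p l ih =>
    rw [show p = (p.1, p.2) from rfl, lookup_cons] at h
    by_cases hk : p.1 = k
    · rw [if_pos hk] at h
      injection h with h
      subst h hk
      exact List.mem_cons_self
    · rw [if_neg hk] at h
      exact List.mem_cons_of_mem _ (ih h)

theorem mem_eraseKey {α : Type} {l : List (String × α)} {p : String × α} {y : String}
    (h : p ∈ eraseKey y l) : p ∈ l ∧ p.1 ≠ y := by
  unfold eraseKey at h
  have := List.mem_filter.mp h
  refine ⟨this.1, by simpa using this.2⟩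

/-! ### closed terms are fixed by substitutions -/

mutual
theorem lsubst_closed {Sg Ps G i N T} (h : Typing Sg Ps G i N T) :
    ∀ δ, (∀ p ∈ δ, lookup G p.1 = (none : Option Ty)) → N.lsubst δ = N := by
  cases h with
  | unit => intro δ hδ; rfl
  | int => intro δ hδ; rfl
  | loc _ => intro δ hδ; rfl
  | lvar hl =>
    intro δ hδ
    rename_i x'
    cases hd : lookup δ x' with
    | none => simp [Tm.lsubst, hd]
    | some V =>
      have := hδ _ (lookup_mem hd)
      simp at this
      rw [this] at hl; cases hl
  | gvar hu hs =>
    intro δ hδ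
    simp only [Tm.lsubst]
    rw [lsubstList_closed hs δ hδ]
  | lam hb =>
    intro δ hδ
    rename_i x' Mb T1 T2
    simp only [Tm.lsubst]
    rw [lsubst_closed hb (eraseKey x' δ) ?_]
    intro p hp
    obtain ⟨hp1, hp2⟩ := mem_eraseKey hp
    rw [lookup_cons]
    simp [Ne.symm hp2, hδ _ hp1]
  | app h1 h2 =>
    intro δ hδ
    simp only [Tm.lsubst]
    rw [lsubst_closed h1 δ hδ, lsubst_closed h2 δ hδ]
  | rec' hb =>
    intro δ hδ
    rename_i f x' Mb T1 T2
    simp only [Tm.lsubst]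
    rw [lsubst_closed hb (eraseKey x' (eraseKey f δ)) ?_]
    intro p hp
    obtain ⟨hp1, hp2⟩ := mem_eraseKey hp
    obtain ⟨hp3, hp4⟩ := mem_eraseKey hp1
    rw [lookup_cons, lookup_cons]
    simp [Ne.symm hp2, Ne.symm hp4, hδ _ hp3]
  | arith h1 h2 =>
    intro δ hδ
    simp only [Tm.lsubst]
    rw [lsubst_closed h1 δ hδ, lsubst_closed h2 δ hδ]
  | ite h1 h2 h3 =>
    intro δ hδ
    simp only [Tm.lsubst]
    rw [lsubst_closed h1 δ hδ, lsubst_closed h2 δ hδ, lsubst_closed h3 δ hδ]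
  | ref h1 =>
    intro δ hδ
    simp only [Tm.lsubst]
    rw [lsubst_closed h1 δ hδ]
  | deref h1 =>
    intro δ hδ
    simp only [Tm.lsubst]
    rw [lsubst_closed h1 δ hδ]
  | assign h1 h2 =>
    intro δ hδ
    simp only [Tm.lsubst]
    rw [lsubst_closed h1 δ hδ, lsubst_closed h2 δ hδ]
  | box h1 => intro δ hδ; rfl
  | letbox h1 h2 =>
    intro δ hδ
    simp only [Tm.lsubst]
    rw [lsubst_closed h1 δ hδ, lsubst_closed h2 δ hδ]

theorem lsubstList_closed {Sg Ps G i δ0 G'} (h : SubstTyping Sg Ps G i δ0 G') :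
    ∀ δ, (∀ p ∈ δ, lookup G p.1 = (none : Option Ty)) → lsubstList δ0 δ = δ0 := by
  cases h with
  | nil => intro δ hδ; rfl
  | cons hV hval hrest =>
    intro δ hδ
    simp only [lsubstList]
    rw [lsubst_closed hV δ hδ, lsubstList_closed hrest δ hδ]
end

end BetaExpAux
namespace BetaExpAux

mutual
theorem gsubst_closed (N : Tm) : ∀ {Sg Ps G i T}, Typing Sg Ps G i N T →
    ∀ σ, (∀ p ∈ σ, lookup Ps p.1 = (none : Option (LCtx × Ty))) → N.gsubst σ = N := by
  intro Sg Ps G i T h σ hσ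
  cases h with
  | unit => rfl
  | int => rfl
  | loc _ => rfl
  | lvar hl => rfl
  | gvar hu hs =>
    rename_i u δ0 G'
    have hnone : lookup σ u = none := by
      cases hd : lookup σ u with
      | none => rfl
      | some V =>
        have := hσ _ (lookup_mem hd)
        simp at this
        rw [this] at hu; cases hu
    simp only [Tm.gsubst, hnone]
    rw [gsubstList_closed' δ0 hs σ hσ]
  | lam hb =>
    simp only [Tm.gsubst]
    rw [gsubst_closed _ hb σ hσ]
  | app h1 h2 =>
    simp only [Tm.gsubst]
    rw [gsubst_closed _ h1 σ hσ, gsubst_closed _ h2 σ hσ]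
  | rec' hb =>
    simp only [Tm.gsubst]
    rw [gsubst_closed _ hb σ hσ]
  | arith h1 h2 =>
    simp only [Tm.gsubst]
    rw [gsubst_closed _ h1 σ hσ, gsubst_closed _ h2 σ hσ]
  | ite h1 h2 h3 =>
    simp only [Tm.gsubst]
    rw [gsubst_closed _ h1 σ hσ, gsubst_closed _ h2 σ hσ, gsubst_closed _ h3 σ hσ]
  | ref h1 =>
    simp only [Tm.gsubst]
    rw [gsubst_closed _ h1 σ hσ]
  | deref h1 =>
    simp only [Tm.gsubst]
    rw [gsubst_closed _ h1 σ hσ]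
  | assign h1 h2 =>
    simp only [Tm.gsubst]
    rw [gsubst_closed _ h1 σ hσ, gsubst_closed _ h2 σ hσ]
  | box h1 =>
    simp only [Tm.gsubst]
    rw [gsubst_closed _ h1 σ hσ]
  | letbox h1 h2 =>
    rename_i u M1 M2 G' T1
    simp only [Tm.gsubst]
    rw [gsubst_closed _ h1 σ hσ, gsubst_closed _ h2 (eraseKey u σ) ?_]
    intro p hp
    obtain ⟨hp1, hp2⟩ := mem_eraseKey hp
    rw [lookup_cons]
    simp [Ne.symm hp2, hσ _ hp1]
termination_by sizeOf N

theorem gsubstList_closed' (δ0 : List (LVar × Tm)) :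
    ∀ {Sg Ps G i G'}, SubstTyping Sg Ps G i δ0 G' →
    ∀ σ, (∀ p ∈ σ, lookup Ps p.1 = (none : Option (LCtx × Ty))) → gsubstList δ0 σ = δ0 := by
  intro Sg Ps G i G' h σ hσ
  cases h with
  | nil => rfl
  | cons hV hval hrest =>
    rename_i x' V T' δ' G''
    simp only [gsubstList]
    rw [gsubst_closed _ hV σ hσ, gsubstList_closed' _ hrest σ hσ]
termination_by sizeOf δ0
end

end BetaExpAux
namespace BetaExpAux

/-! ### The expansion relation: `E x M a b` means `b` is obtained from `a` by
    replacing some occurrences of `M` by the thunk `(λx.M) ()`. -/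

mutual
inductive E (x : LVar) (M : Tm) : Tm → Tm → Prop where
  | exp : E x M M (.app (.lam x M) .unit)
  | unit : E x M .unit .unit
  | int {n} : E x M (.int n) (.int n)
  | lvar {y} : E x M (.lvar y) (.lvar y)
  | gvar {u δ δ'} : EList x M δ δ' → E x M (.gvar u δ) (.gvar u δ')
  | loc {l} : E x M (.loc l) (.loc l)
  | lam {y a b} : E x M a b → E x M (.lam y a) (.lam y b)
  | app {a1 a2 b1 b2} : E x M a1 b1 → E x M a2 b2 → E x M (.app a1 a2) (.app b1 b2)
  | rec' {f y a b} : E x M a b → E x M (.rec' f y a) (.rec' f y b)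
  | arith {op a1 a2 b1 b2} : E x M a1 b1 → E x M a2 b2 →
      E x M (.arith op a1 a2) (.arith op b1 b2)
  | ite {a1 a2 a3 b1 b2 b3} : E x M a1 b1 → E x M a2 b2 → E x M a3 b3 →
      E x M (.ite a1 a2 a3) (.ite b1 b2 b3)
  | ref {a b} : E x M a b → E x M (.ref a) (.ref b)
  | deref {a b} : E x M a b → E x M (.deref a) (.deref b)
  | assign {a1 a2 b1 b2} : E x M a1 b1 → E x M a2 b2 → E x M (.assign a1 a2) (.assign b1 b2)
  | box {a b} : E x M a b → E x M (.box a) (.box b)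
  | letbox {u a1 a2 b1 b2} : E x M a1 b1 → E x M a2 b2 →
      E x M (.letbox u a1 a2) (.letbox u b1 b2)

inductive EList (x : LVar) (M : Tm) : List (LVar × Tm) → List (LVar × Tm) → Prop where
  | nil : EList x M [] []
  | cons {y a b δ δ'} : E x M a b → EList x M δ δ' → EList x M ((y, a) :: δ) ((y, b) :: δ')
end

variable {x : LVar} {M : Tm}

mutual
theorem E_refl (x : LVar) (M : Tm) : ∀ a, E x M a a
  | .unit => .unit
  | .int _ => .int
  | .lvar _ => .lvar
  | .gvar _ δ => .gvar (EList_refl x M δ)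
  | .loc _ => .loc
  | .lam _ a => .lam (E_refl x M a)
  | .app a1 a2 => .app (E_refl x M a1) (E_refl x M a2)
  | .rec' _ _ a => .rec' (E_refl x M a)
  | .arith _ a1 a2 => .arith (E_refl x M a1) (E_refl x M a2)
  | .ite a1 a2 a3 => .ite (E_refl x M a1) (E_refl x M a2) (E_refl x M a3)
  | .ref a => .ref (E_refl x M a)
  | .deref a => .deref (E_refl x M a)
  | .assign a1 a2 => .assign (E_refl x M a1) (E_refl x M a2)
  | .box a => .box (E_refl x M a)
  | .letbox _ a1 a2 => .letbox (E_refl x M a1) (E_refl x M a2)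

theorem EList_refl (x : LVar) (M : Tm) : ∀ δ, EList x M δ δ
  | [] => .nil
  | (_, a) :: δ => .cons (E_refl x M a) (EList_refl x M δ)
end

theorem E_value_right {a b} (h : E x M a b) (hb : IsValue b) : IsValue a := by
  cases h <;> cases hb <;> constructor

theorem E_value_left {a b} (h : E x M a b) (ha : IsValue a) :
    IsValue b ∨ (a = M ∧ b = .app (.lam x M) .unit) := by
  cases h with
  | exp => exact Or.inr ⟨rfl, rfl⟩
  | _ => left; cases ha <;> constructor

theorem EList_lookup {δ δ'} (h : EList x M δ δ') (y : LVar) :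
    (lookup δ y = none ∧ lookup δ' y = none) ∨
      ∃ a b, lookup δ y = some a ∧ lookup δ' y = some b ∧ E x M a b := by
  induction δ generalizing δ' with
  | nil => cases h; exact Or.inl ⟨rfl, rfl⟩
  | cons p δ0 ih =>
    obtain ⟨z, a⟩ := p
    cases h with
    | cons hab hrest =>
      rename_i b δ0'
      rw [lookup_cons, lookup_cons]
      by_cases hz : z = y
      · simp only [if_pos hz]
        exact Or.inr ⟨a, b, rfl, rfl, hab⟩
      · simp only [if_neg hz]
        exact ih hrest

theorem EList_eraseKey {δ δ'} (h : EList x M δ δ') (y : LVar) :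
    EList x M (eraseKey y δ) (eraseKey y δ') := by
  induction δ generalizing δ' with
  | nil => cases h; exact .nil
  | cons p δ0 ih =>
    obtain ⟨z, a⟩ := p
    cases h with
    | cons hab hrest =>
      by_cases hz : z = y
      · simpa [eraseKey, List.filter_cons, hz] using ih hrest
      · simpa [eraseKey, List.filter_cons, hz] using EList.cons hab (ih hrest)

end BetaExpAux
namespace BetaExpAux

variable {x : LVar} {M : Tm}

mutual
theorem E_lsubst (hMc : ∀ δ, M.lsubst δ = M) : ∀ (a : Tm) {b δ δ'},
    E x M a b → EList x M δ δ' → E x M (a.lsubst δ) (b.lsubst δ') := by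
  intro a b δ δ' h hδ
  cases h with
  | exp =>
    simp only [Tm.lsubst]
    rw [hMc, hMc]
    exact .exp
  | unit => exact .unit
  | int => exact .int
  | lvar =>
    rename_i y
    simp only [Tm.lsubst]
    rcases EList_lookup hδ y with ⟨h1, h2⟩ | ⟨a0, b0, h1, h2, hE⟩ <;>
      simp only [h1, h2, Option.getD_some, Option.getD_none]
    · exact .lvar
    · exact hE
  | gvar hl =>
    rename_i u δ0 δ0'
    simp only [Tm.lsubst]
    exact .gvar (EList_lsubst hMc δ0 hl hδ)
  | loc => exact .loc
  | lam h0 =>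
    rename_i y a0 b0
    simp only [Tm.lsubst]
    exact .lam (E_lsubst hMc a0 h0 (EList_eraseKey hδ y))
  | app h1 h2 =>
    rename_i a1 a2 b1 b2
    simp only [Tm.lsubst]
    exact .app (E_lsubst hMc a1 h1 hδ) (E_lsubst hMc a2 h2 hδ)
  | rec' h0 =>
    rename_i f y a0 b0
    simp only [Tm.lsubst]
    exact .rec' (E_lsubst hMc a0 h0 (EList_eraseKey (EList_eraseKey hδ f) y))
  | arith h1 h2 =>
    rename_i op a1 a2 b1 b2
    simp only [Tm.lsubst]
    exact .arith (E_lsubst hMc a1 h1 hδ) (E_lsubst hMc a2 h2 hδ)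
  | ite h1 h2 h3 =>
    rename_i a1 a2 a3 b1 b2 b3
    simp only [Tm.lsubst]
    exact .ite (E_lsubst hMc a1 h1 hδ) (E_lsubst hMc a2 h2 hδ) (E_lsubst hMc a3 h3 hδ)
  | ref h1 =>
    rename_i a1 b1
    simp only [Tm.lsubst]
    exact .ref (E_lsubst hMc a1 h1 hδ)
  | deref h1 =>
    rename_i a1 b1
    simp only [Tm.lsubst]
    exact .deref (E_lsubst hMc a1 h1 hδ)
  | assign h1 h2 =>
    rename_i a1 a2 b1 b2
    simp only [Tm.lsubst]
    exact .assign (E_lsubst hMc a1 h1 hδ) (E_lsubst hMc a2 h2 hδ)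
  | box h1 =>
    simp only [Tm.lsubst]
    exact .box h1
  | letbox h1 h2 =>
    rename_i u a1 a2 b1 b2
    simp only [Tm.lsubst]
    exact .letbox (E_lsubst hMc a1 h1 hδ) (E_lsubst hMc a2 h2 hδ)
termination_by a => sizeOf a

theorem EList_lsubst (hMc : ∀ δ, M.lsubst δ = M) : ∀ (l : List (LVar × Tm)) {l' δ δ'},
    EList x M l l' → EList x M δ δ' → EList x M (lsubstList l δ) (lsubstList l' δ') := by
  intro l l' δ δ' h hδ
  cases h with
  | nil => exact .nil
  | cons hab hrest =>
    rename_i y a b l0 l0'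
    simp only [lsubstList]
    exact .cons (E_lsubst hMc a hab hδ) (EList_lsubst hMc l0 hrest hδ)
termination_by l => sizeOf l
end

mutual
theorem E_gsubst (hMc : ∀ δ, M.lsubst δ = M) (hMg : ∀ σ, M.gsubst σ = M) :
    ∀ (a : Tm) {b σ σ'},
    E x M a b → EList x M σ σ' → E x M (a.gsubst σ) (b.gsubst σ') := by
  intro a b σ σ' h hσ
  cases h with
  | exp =>
    simp only [Tm.gsubst]
    rw [hMg, hMg]
    exact .exp
  | unit => exact .unit
  | int => exact .int
  | lvar => exact .lvar
  | gvar hl =>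
    rename_i u δ0 δ0'
    rcases EList_lookup hσ u with ⟨h1, h2⟩ | ⟨m0, m0', h1, h2, hE⟩
    · simp only [Tm.gsubst, h1, h2]
      exact .gvar (EList_gsubst hMc hMg δ0 hl hσ)
    · simp only [Tm.gsubst, h1, h2]
      exact E_lsubst hMc m0 hE (EList_gsubst hMc hMg δ0 hl hσ)
  | loc => exact .loc
  | lam h0 =>
    rename_i y a0 b0
    simp only [Tm.gsubst]
    exact .lam (E_gsubst hMc hMg a0 h0 hσ)
  | app h1 h2 =>
    rename_i a1 a2 b1 b2
    simp only [Tm.gsubst]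
    exact .app (E_gsubst hMc hMg a1 h1 hσ) (E_gsubst hMc hMg a2 h2 hσ)
  | rec' h0 =>
    rename_i f y a0 b0
    simp only [Tm.gsubst]
    exact .rec' (E_gsubst hMc hMg a0 h0 hσ)
  | arith h1 h2 =>
    rename_i op a1 a2 b1 b2
    simp only [Tm.gsubst]
    exact .arith (E_gsubst hMc hMg a1 h1 hσ) (E_gsubst hMc hMg a2 h2 hσ)
  | ite h1 h2 h3 =>
    rename_i a1 a2 a3 b1 b2 b3
    simp only [Tm.gsubst]
    exact .ite (E_gsubst hMc hMg a1 h1 hσ) (E_gsubst hMc hMg a2 h2 hσ)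
      (E_gsubst hMc hMg a3 h3 hσ)
  | ref h1 =>
    rename_i a1 b1
    simp only [Tm.gsubst]
    exact .ref (E_gsubst hMc hMg a1 h1 hσ)
  | deref h1 =>
    rename_i a1 b1
    simp only [Tm.gsubst]
    exact .deref (E_gsubst hMc hMg a1 h1 hσ)
  | assign h1 h2 =>
    rename_i a1 a2 b1 b2
    simp only [Tm.gsubst]
    exact .assign (E_gsubst hMc hMg a1 h1 hσ) (E_gsubst hMc hMg a2 h2 hσ)
  | box h1 =>
    rename_i a1 b1
    simp only [Tm.gsubst]
    exact .box (E_gsubst hMc hMg a1 h1 hσ)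
  | letbox h1 h2 =>
    rename_i u a1 a2 b1 b2
    simp only [Tm.gsubst]
    exact .letbox (E_gsubst hMc hMg a1 h1 hσ)
      (E_gsubst hMc hMg a2 h2 (EList_eraseKey hσ u))
termination_by a => sizeOf a

theorem EList_gsubst (hMc : ∀ δ, M.lsubst δ = M) (hMg : ∀ σ, M.gsubst σ = M) :
    ∀ (l : List (LVar × Tm)) {l' σ σ'},
    EList x M l l' → EList x M σ σ' → EList x M (gsubstList l σ) (gsubstList l' σ') := by
  intro l l' σ σ' h hσ
  cases h with
  | nil => exact .nil
  | cons hab hrest =>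
    rename_i y a b l0 l0'
    simp only [gsubstList]
    exact .cons (E_gsubst hMc hMg a hab hσ) (EList_gsubst hMc hMg l0 hrest hσ)
termination_by l => sizeOf l
end

end BetaExpAux
namespace BetaExpAux

variable {x : LVar} {M : Tm}

/-! ### Heap relation -/

def EH (x : LVar) (M : Tm) (h1 h2 : Heap) : Prop :=
  ∀ l, (h1 l = none ∧ h2 l = none) ∨
    ∃ V V', h1 l = some V ∧ h2 l = some V' ∧ E x M V V'

theorem EH_refl (x : LVar) (M : Tm) (h : Heap) : EH x M h h := by
  intro l
  cases hl : h l with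
  | none => exact Or.inl ⟨rfl, rfl⟩
  | some V => exact Or.inr ⟨V, V, rfl, rfl, E_refl x M V⟩

theorem EH_update {h1 h2 V V'} (hh : EH x M h1 h2) (hV : E x M V V') (l : Loc) :
    EH x M (hupdate h1 l V) (hupdate h2 l V') := by
  intro l'
  by_cases hl : l' = l
  · exact Or.inr ⟨V, V', by simp [hupdate, hl], by simp [hupdate, hl], hV⟩
  · simpa [hupdate, hl] using hh l'

/-! ### Congruence of `E` under contexts -/

theorem E_plug {a b} (K : ECtx) (h : E x M a b) : E x M (K.plug a) (K.plug b) := by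
  induction K with
  | hole => exact h
  | appL K0 N ih => exact .app ih (E_refl x M N)
  | appR V K0 ih => exact .app (E_refl x M V) ih
  | arithL op K0 N ih => exact .arith ih (E_refl x M N)
  | arithR op V K0 ih => exact .arith (E_refl x M V) ih
  | ite K0 N P ih => exact .ite ih (E_refl x M N) (E_refl x M P)
  | ref K0 ih => exact .ref ih
  | deref K0 ih => exact .deref ih
  | assignL K0 N ih => exact .assign ih (E_refl x M N)
  | assignR V K0 ih => exact .assign (E_refl x M V) ih
  | letboxL u K0 N ih => exact .letbox ih (E_refl x M N)
  | letboxR u V K0 ih => exact .letbox (E_refl x M V) ih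

theorem E_ctxplug {a b} (C : Ctx) (h : E x M a b) : E x M (C.plug a) (C.plug b) := by
  induction C with
  | hole => exact h
  | lam y C0 ih => exact .lam ih
  | appL C0 N ih => exact .app ih (E_refl x M N)
  | appR N C0 ih => exact .app (E_refl x M N) ih
  | rec' f y C0 ih => exact .rec' ih
  | arithL op C0 N ih => exact .arith ih (E_refl x M N)
  | arithR op N C0 ih => exact .arith (E_refl x M N) ih
  | ite1 C0 N P ih => exact .ite ih (E_refl x M N) (E_refl x M P)
  | ite2 N C0 P ih => exact .ite (E_refl x M N) ih (E_refl x M P)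
  | ite3 N P C0 ih => exact .ite (E_refl x M N) (E_refl x M P) ih
  | ref C0 ih => exact .ref ih
  | deref C0 ih => exact .deref ih
  | assignL C0 N ih => exact .assign ih (E_refl x M N)
  | assignR N C0 ih => exact .assign (E_refl x M N) ih
  | box C0 ih => exact .box ih
  | letboxL u C0 N ih => exact .letbox ih (E_refl x M N)
  | letboxR u N C0 ih => exact .letbox (E_refl x M N) ih

/-! ### Lifting steps under evaluation contexts -/

theorem step_lift {K : ECtx} (wf : ECtxWf K) {a b h1 h2}
    (h : Step (a, h1) (b, h2)) : Step (K.plug a, h1) (K.plug b, h2) := by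
  by_cases hK : K = .hole
  · subst hK; exact h
  · exact .ktx wf hK h

theorem star_lift {K : ECtx} (wf : ECtxWf K) {c d : Tm × Heap} (h : StepStar c d) :
    StepStar (K.plug c.1, c.2) (K.plug d.1, d.2) := by
  induction h with
  | refl => exact .refl
  | tail _ h2 ih => exact ih.tail (step_lift wf h2)

/-! ### Values don't step -/

theorem plug_not_value {K : ECtx} (hK : K ≠ .hole) (a : Tm) : ¬ IsValue (K.plug a) := by
  cases K <;> simp only [ECtx.plug] <;> intro hv <;> first | exact hK rfl | cases hv

theorem value_no_step {v : Tm} {hp : Heap} {c} (hv : IsValue v) (h : Step (v, hp) c) :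
    False := by
  cases h with
  | ktx wf hK hstep => exact plug_not_value hK _ hv
  | _ => cases hv

theorem plug_eq_lam {K : ECtx} {a y B} (h : K.plug a = .lam y B) : K = .hole := by
  cases K <;> simp [ECtx.plug] at h <;> rfl

theorem plug_eq_unit {K : ECtx} {a} (h : K.plug a = .unit) : K = .hole := by
  cases K <;> simp [ECtx.plug] at h <;> rfl

/-! ### Administrative reduction to a value on the right -/

theorem E_value_steps (hMc : ∀ δ, M.lsubst δ = M) {a b} (h : E x M a b)
    (ha : IsValue a) (hp : Heap) :
    ∃ b', StepStar (b, hp) (b', hp) ∧ IsValue b' ∧ E x M a b' := by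
  rcases E_value_left h ha with hb | ⟨ha', hb'⟩
  · exact ⟨b, .refl, hb, h⟩
  · refine ⟨M, ?_, ?_, ?_⟩
    · rw [hb']
      have hstep : Step (.app (.lam x M) .unit, hp) (M.lsubst [(x, .unit)], hp) :=
        .beta .unit
      rw [hMc] at hstep
      exact .single hstep
    · rw [← ha']; exact ha
    · rw [ha']; exact E_refl x M M

/-! ### Inversion lemmas for `E` with a constructor on the left,
    up to administrative steps on the right -/

theorem E_app_inv (hMc : ∀ δ, M.lsubst δ = M) {a1 a2 t} (h : E x M (.app a1 a2) t)
    (hp : Heap) :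
    ∃ t1 t2, StepStar (t, hp) (.app t1 t2, hp) ∧ E x M a1 t1 ∧ E x M a2 t2 := by
  cases h with
  | exp =>
    have hstep : Step (.app (.lam x (.app a1 a2)) .unit, hp)
        ((Tm.app a1 a2).lsubst [(x, .unit)], hp) := .beta .unit
    rw [hMc] at hstep
    exact ⟨a1, a2, .single hstep, E_refl x _ a1, E_refl x _ a2⟩
  | app h1 h2 => exact ⟨_, _, .refl, h1, h2⟩

theorem E_arith_inv (hMc : ∀ δ, M.lsubst δ = M) {op a1 a2 t}
    (h : E x M (.arith op a1 a2) t) (hp : Heap) :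
    ∃ t1 t2, StepStar (t, hp) (.arith op t1 t2, hp) ∧ E x M a1 t1 ∧ E x M a2 t2 := by
  cases h with
  | exp =>
    have hstep : Step (.app (.lam x (.arith op a1 a2)) .unit, hp)
        ((Tm.arith op a1 a2).lsubst [(x, .unit)], hp) := .beta .unit
    rw [hMc] at hstep
    exact ⟨a1, a2, .single hstep, E_refl x _ a1, E_refl x _ a2⟩
  | arith h1 h2 => exact ⟨_, _, .refl, h1, h2⟩

theorem E_ite_inv (hMc : ∀ δ, M.lsubst δ = M) {a1 a2 a3 t}
    (h : E x M (.ite a1 a2 a3) t) (hp : Heap) :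
    ∃ t1 t2 t3, StepStar (t, hp) (.ite t1 t2 t3, hp) ∧ E x M a1 t1 ∧ E x M a2 t2 ∧
      E x M a3 t3 := by
  cases h with
  | exp =>
    have hstep : Step (.app (.lam x (.ite a1 a2 a3)) .unit, hp)
        ((Tm.ite a1 a2 a3).lsubst [(x, .unit)], hp) := .beta .unit
    rw [hMc] at hstep
    exact ⟨a1, a2, a3, .single hstep, E_refl x _ a1, E_refl x _ a2, E_refl x _ a3⟩
  | ite h1 h2 h3 => exact ⟨_, _, _, .refl, h1, h2, h3⟩

theorem E_ref_inv (hMc : ∀ δ, M.lsubst δ = M) {a1 t} (h : E x M (.ref a1) t)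
    (hp : Heap) :
    ∃ t1, StepStar (t, hp) (.ref t1, hp) ∧ E x M a1 t1 := by
  cases h with
  | exp =>
    have hstep : Step (.app (.lam x (.ref a1)) .unit, hp)
        ((Tm.ref a1).lsubst [(x, .unit)], hp) := .beta .unit
    rw [hMc] at hstep
    exact ⟨a1, .single hstep, E_refl x _ a1⟩
  | ref h1 => exact ⟨_, .refl, h1⟩

theorem E_deref_inv (hMc : ∀ δ, M.lsubst δ = M) {a1 t} (h : E x M (.deref a1) t)
    (hp : Heap) :
    ∃ t1, StepStar (t, hp) (.deref t1, hp) ∧ E x M a1 t1 := by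
  cases h with
  | exp =>
    have hstep : Step (.app (.lam x (.deref a1)) .unit, hp)
        ((Tm.deref a1).lsubst [(x, .unit)], hp) := .beta .unit
    rw [hMc] at hstep
    exact ⟨a1, .single hstep, E_refl x _ a1⟩
  | deref h1 => exact ⟨_, .refl, h1⟩

theorem E_assign_inv (hMc : ∀ δ, M.lsubst δ = M) {a1 a2 t}
    (h : E x M (.assign a1 a2) t) (hp : Heap) :
    ∃ t1 t2, StepStar (t, hp) (.assign t1 t2, hp) ∧ E x M a1 t1 ∧ E x M a2 t2 := by
  cases h with
  | exp =>
    have hstep : Step (.app (.lam x (.assign a1 a2)) .unit, hp)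
        ((Tm.assign a1 a2).lsubst [(x, .unit)], hp) := .beta .unit
    rw [hMc] at hstep
    exact ⟨a1, a2, .single hstep, E_refl x _ a1, E_refl x _ a2⟩
  | assign h1 h2 => exact ⟨_, _, .refl, h1, h2⟩

theorem E_letbox_inv (hMc : ∀ δ, M.lsubst δ = M) {u a1 a2 t}
    (h : E x M (.letbox u a1 a2) t) (hp : Heap) :
    ∃ t1 t2, StepStar (t, hp) (.letbox u t1 t2, hp) ∧ E x M a1 t1 ∧ E x M a2 t2 := by
  cases h with
  | exp =>
    have hstep : Step (.app (.lam x (.letbox u a1 a2)) .unit, hp)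
        ((Tm.letbox u a1 a2).lsubst [(x, .unit)], hp) := .beta .unit
    rw [hMc] at hstep
    exact ⟨a1, a2, .single hstep, E_refl x _ a1, E_refl x _ a2⟩
  | letbox h1 h2 => exact ⟨_, _, .refl, h1, h2⟩

end BetaExpAux
namespace BetaExpAux

variable {x : LVar} {M : Tm}

/-- Backward decomposition: if the `M`-side is `K.plug s1`, the thunk side
reduces (administratively) to a related decomposition. -/
theorem E_decomp_left (hMc : ∀ δ, M.lsubst δ = M) {K : ECtx} (wf : ECtxWf K) :
    ∀ {s1 t}, E x M (K.plug s1) t → ∀ (hp : Heap),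
    ∃ K' t1, ECtxWf K' ∧ StepStar (t, hp) (K'.plug t1, hp) ∧ E x M s1 t1 ∧
      ∀ a b, E x M a b → E x M (K.plug a) (K'.plug b) := by
  induction wf with
  | hole =>
    intro s1 t h hp
    exact ⟨.hole, t, .hole, .refl, h, fun a b hab => hab⟩
  | appL wf0 ih =>
    rename_i K0 N
    intro s1 t h hp
    obtain ⟨t1, t2, hsteps, h1, h2⟩ := E_app_inv hMc h hp
    obtain ⟨K0', t1', hwf', hsteps', hE', hcong'⟩ := ih h1 hp
    refine ⟨.appL K0' t2, t1', .appL hwf', ?_, hE', ?_⟩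
    · exact hsteps.trans (star_lift (ECtxWf.appL (N := t2) ECtxWf.hole) hsteps')
    · intro a b hab; exact .app (hcong' a b hab) h2
  | appR hV wf0 ih =>
    rename_i V K0
    intro s1 t h hp
    obtain ⟨t1, t2, hsteps, h1, h2⟩ := E_app_inv hMc h hp
    obtain ⟨t1s, hsteps1, hval1, hE1⟩ := E_value_steps hMc h1 hV hp
    obtain ⟨K0', t1', hwf', hsteps', hE', hcong'⟩ := ih h2 hp
    refine ⟨.appR t1s K0', t1', .appR hval1 hwf', ?_, hE', ?_⟩
    · exact hsteps.trans ((star_lift (ECtxWf.appL (N := t2) ECtxWf.hole) hsteps1).trans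
        (star_lift (ECtxWf.appR hval1 ECtxWf.hole) hsteps'))
    · intro a b hab; exact .app hE1 (hcong' a b hab)
  | arithL wf0 ih =>
    rename_i op K0 N
    intro s1 t h hp
    obtain ⟨t1, t2, hsteps, h1, h2⟩ := E_arith_inv hMc h hp
    obtain ⟨K0', t1', hwf', hsteps', hE', hcong'⟩ := ih h1 hp
    refine ⟨.arithL op K0' t2, t1', .arithL hwf', ?_, hE', ?_⟩
    · exact hsteps.trans (star_lift (ECtxWf.arithL (N := t2) ECtxWf.hole) hsteps')
    · intro a b hab; exact .arith (hcong' a b hab) h2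
  | arithR hV wf0 ih =>
    rename_i op V K0
    intro s1 t h hp
    obtain ⟨t1, t2, hsteps, h1, h2⟩ := E_arith_inv hMc h hp
    obtain ⟨t1s, hsteps1, hval1, hE1⟩ := E_value_steps hMc h1 hV hp
    obtain ⟨K0', t1', hwf', hsteps', hE', hcong'⟩ := ih h2 hp
    refine ⟨.arithR op t1s K0', t1', .arithR hval1 hwf', ?_, hE', ?_⟩
    · exact hsteps.trans ((star_lift (ECtxWf.arithL (N := t2) ECtxWf.hole) hsteps1).trans
        (star_lift (ECtxWf.arithR hval1 ECtxWf.hole) hsteps'))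
    · intro a b hab; exact .arith hE1 (hcong' a b hab)
  | ite wf0 ih =>
    rename_i K0 N P
    intro s1 t h hp
    obtain ⟨t1, t2, t3, hsteps, h1, h2, h3⟩ := E_ite_inv hMc h hp
    obtain ⟨K0', t1', hwf', hsteps', hE', hcong'⟩ := ih h1 hp
    refine ⟨.ite K0' t2 t3, t1', .ite hwf', ?_, hE', ?_⟩
    · exact hsteps.trans (star_lift (ECtxWf.ite (N := t2) (P := t3) ECtxWf.hole) hsteps')
    · intro a b hab; exact .ite (hcong' a b hab) h2 h3
  | ref wf0 ih =>
    rename_i K0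
    intro s1 t h hp
    obtain ⟨t1, hsteps, h1⟩ := E_ref_inv hMc h hp
    obtain ⟨K0', t1', hwf', hsteps', hE', hcong'⟩ := ih h1 hp
    refine ⟨.ref K0', t1', .ref hwf', ?_, hE', ?_⟩
    · exact hsteps.trans (star_lift (ECtxWf.ref ECtxWf.hole) hsteps')
    · intro a b hab; exact .ref (hcong' a b hab)
  | deref wf0 ih =>
    rename_i K0
    intro s1 t h hp
    obtain ⟨t1, hsteps, h1⟩ := E_deref_inv hMc h hp
    obtain ⟨K0', t1', hwf', hsteps', hE', hcong'⟩ := ih h1 hp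
    refine ⟨.deref K0', t1', .deref hwf', ?_, hE', ?_⟩
    · exact hsteps.trans (star_lift (ECtxWf.deref ECtxWf.hole) hsteps')
    · intro a b hab; exact .deref (hcong' a b hab)
  | assignL wf0 ih =>
    rename_i K0 N
    intro s1 t h hp
    obtain ⟨t1, t2, hsteps, h1, h2⟩ := E_assign_inv hMc h hp
    obtain ⟨K0', t1', hwf', hsteps', hE', hcong'⟩ := ih h1 hp
    refine ⟨.assignL K0' t2, t1', .assignL hwf', ?_, hE', ?_⟩
    · exact hsteps.trans (star_lift (ECtxWf.assignL (N := t2) ECtxWf.hole) hsteps')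
    · intro a b hab; exact .assign (hcong' a b hab) h2
  | assignR hV wf0 ih =>
    rename_i V K0
    intro s1 t h hp
    obtain ⟨t1, t2, hsteps, h1, h2⟩ := E_assign_inv hMc h hp
    obtain ⟨t1s, hsteps1, hval1, hE1⟩ := E_value_steps hMc h1 hV hp
    obtain ⟨K0', t1', hwf', hsteps', hE', hcong'⟩ := ih h2 hp
    refine ⟨.assignR t1s K0', t1', .assignR hval1 hwf', ?_, hE', ?_⟩
    · exact hsteps.trans ((star_lift (ECtxWf.assignL (N := t2) ECtxWf.hole) hsteps1).trans
        (star_lift (ECtxWf.assignR hval1 ECtxWf.hole) hsteps'))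
    · intro a b hab; exact .assign hE1 (hcong' a b hab)
  | letboxL wf0 ih =>
    rename_i u K0 N
    intro s1 t h hp
    obtain ⟨t1, t2, hsteps, h1, h2⟩ := E_letbox_inv hMc h hp
    obtain ⟨K0', t1', hwf', hsteps', hE', hcong'⟩ := ih h1 hp
    refine ⟨.letboxL u K0' t2, t1', .letboxL hwf', ?_, hE', ?_⟩
    · exact hsteps.trans (star_lift (ECtxWf.letboxL (u := u) (N := t2) ECtxWf.hole) hsteps')
    · intro a b hab; exact .letbox (hcong' a b hab) h2
  | letboxR hV wf0 ih =>
    rename_i u V K0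
    intro s1 t h hp
    obtain ⟨t1, t2, hsteps, h1, h2⟩ := E_letbox_inv hMc h hp
    obtain ⟨t1s, hsteps1, hval1, hE1⟩ := E_value_steps hMc h1 hV hp
    obtain ⟨K0', t1', hwf', hsteps', hE', hcong'⟩ := ih h2 hp
    refine ⟨.letboxR u t1s K0', t1', .letboxR hval1 hwf', ?_, hE', ?_⟩
    · exact hsteps.trans ((star_lift (ECtxWf.letboxL (u := u) (N := t2) ECtxWf.hole) hsteps1).trans
        (star_lift (ECtxWf.letboxR hval1 ECtxWf.hole) hsteps'))
    · intro a b hab; exact .letbox hE1 (hcong' a b hab)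

end BetaExpAux
namespace BetaExpAux

variable {x : LVar} {M : Tm}

theorem E_app_right {s b1 b2} (h : E x M s (.app b1 b2)) :
    (s = M ∧ b1 = .lam x M ∧ b2 = .unit) ∨
    ∃ a1 a2, s = .app a1 a2 ∧ E x M a1 b1 ∧ E x M a2 b2 := by
  generalize hg : Tm.app b1 b2 = t0 at h
  cases h
  case exp =>
    injection hg with hg1 hg2
    exact Or.inl ⟨rfl, hg1, hg2⟩
  case app h1 h2 =>
    injection hg with hg1 hg2
    subst hg1; subst hg2
    exact Or.inr ⟨_, _, rfl, h1, h2⟩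
  all_goals injection hg

/-- Forward decomposition: if the thunk side is `K.plug t1` where `t1` can
step, then the `M`-side decomposes correspondingly. -/
theorem E_decomp_right (hMc : ∀ δ, M.lsubst δ = M) {K : ECtx} (wf : ECtxWf K) :
    ∀ {s t1 hp c}, E x M s (K.plug t1) → Step (t1, hp) c →
    ∃ K' s1, ECtxWf K' ∧ s = K'.plug s1 ∧ E x M s1 t1 ∧
      ∀ a b, E x M a b → E x M (K'.plug a) (K.plug b) := by
  induction wf with
  | hole =>
    intro s t1 hp c h hstep
    exact ⟨.hole, s, .hole, rfl, h, fun a b hab => hab⟩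
  | appL wf0 ih =>
    rename_i K0 N
    intro s t1 hp c h hstep
    rcases E_app_right h with ⟨hs, heq, hN⟩ | ⟨a1, a2, hs, h1, h2⟩
    · have hK0 : K0 = .hole := plug_eq_lam heq
      subst hK0
      simp only [ECtx.plug] at heq
      subst heq
      exact (value_no_step IsValue.lam hstep).elim
    · subst hs
      obtain ⟨K0', s1, hwf', heq2, hE, hcong⟩ := ih h1 hstep
      subst heq2
      refine ⟨.appL K0' _, s1, .appL hwf', rfl, hE, ?_⟩
      intro a b hab; exact .app (hcong a b hab) h2
  | appR hV wf0 ih =>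
    rename_i V K0
    intro s t1 hp c h hstep
    rcases E_app_right h with ⟨hs, heq, hN⟩ | ⟨a1, a2, hs, h1, h2⟩
    · have hK0 : K0 = .hole := plug_eq_unit hN
      subst hK0
      simp only [ECtx.plug] at hN
      subst hN
      exact (value_no_step IsValue.unit hstep).elim
    · subst hs
      obtain ⟨K0', s1, hwf', heq2, hE, hcong⟩ := ih h2 hstep
      subst heq2
      refine ⟨.appR _ K0', s1, .appR (E_value_right h1 hV) hwf', rfl, hE, ?_⟩
      intro a b hab; exact .app h1 (hcong a b hab)
  | arithL wf0 ih =>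
    rename_i op K0 N
    intro s t1 hp c h hstep
    cases h with
    | arith h1 h2 =>
      obtain ⟨K0', s1, hwf', heq, hE, hcong⟩ := ih h1 hstep
      subst heq
      refine ⟨.arithL op K0' _, s1, .arithL hwf', rfl, hE, ?_⟩
      intro a b hab; exact .arith (hcong a b hab) h2
  | arithR hV wf0 ih =>
    rename_i op V K0
    intro s t1 hp c h hstep
    cases h with
    | arith h1 h2 =>
      obtain ⟨K0', s1, hwf', heq, hE, hcong⟩ := ih h2 hstep
      subst heq
      refine ⟨.arithR op _ K0', s1, .arithR (E_value_right h1 hV) hwf', rfl, hE, ?_⟩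
      intro a b hab; exact .arith h1 (hcong a b hab)
  | ite wf0 ih =>
    rename_i K0 N P
    intro s t1 hp c h hstep
    cases h with
    | ite h1 h2 h3 =>
      obtain ⟨K0', s1, hwf', heq, hE, hcong⟩ := ih h1 hstep
      subst heq
      refine ⟨.ite K0' _ _, s1, .ite hwf', rfl, hE, ?_⟩
      intro a b hab; exact .ite (hcong a b hab) h2 h3
  | ref wf0 ih =>
    rename_i K0
    intro s t1 hp c h hstep
    cases h with
    | ref h1 =>
      obtain ⟨K0', s1, hwf', heq, hE, hcong⟩ := ih h1 hstep
      subst heq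
      refine ⟨.ref K0', s1, .ref hwf', rfl, hE, ?_⟩
      intro a b hab; exact .ref (hcong a b hab)
  | deref wf0 ih =>
    rename_i K0
    intro s t1 hp c h hstep
    cases h with
    | deref h1 =>
      obtain ⟨K0', s1, hwf', heq, hE, hcong⟩ := ih h1 hstep
      subst heq
      refine ⟨.deref K0', s1, .deref hwf', rfl, hE, ?_⟩
      intro a b hab; exact .deref (hcong a b hab)
  | assignL wf0 ih =>
    rename_i K0 N
    intro s t1 hp c h hstep
    cases h with
    | assign h1 h2 =>
      obtain ⟨K0', s1, hwf', heq, hE, hcong⟩ := ih h1 hstep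
      subst heq
      refine ⟨.assignL K0' _, s1, .assignL hwf', rfl, hE, ?_⟩
      intro a b hab; exact .assign (hcong a b hab) h2
  | assignR hV wf0 ih =>
    rename_i V K0
    intro s t1 hp c h hstep
    cases h with
    | assign h1 h2 =>
      obtain ⟨K0', s1, hwf', heq, hE, hcong⟩ := ih h2 hstep
      subst heq
      refine ⟨.assignR _ K0', s1, .assignR (E_value_right h1 hV) hwf', rfl, hE, ?_⟩
      intro a b hab; exact .assign h1 (hcong a b hab)
  | letboxL wf0 ih =>
    rename_i u K0 N
    intro s t1 hp c h hstep
    cases h with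
    | letbox h1 h2 =>
      obtain ⟨K0', s1, hwf', heq, hE, hcong⟩ := ih h1 hstep
      subst heq
      refine ⟨.letboxL u K0' _, s1, .letboxL hwf', rfl, hE, ?_⟩
      intro a b hab; exact .letbox (hcong a b hab) h2
  | letboxR hV wf0 ih =>
    rename_i u V K0
    intro s t1 hp c h hstep
    cases h with
    | letbox h1 h2 =>
      obtain ⟨K0', s1, hwf', heq, hE, hcong⟩ := ih h2 hstep
      subst heq
      refine ⟨.letboxR u _ K0', s1, .letboxR (E_value_right h1 hV) hwf', rfl, hE, ?_⟩
      intro a b hab; exact .letbox h1 (hcong a b hab)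

end BetaExpAux
namespace BetaExpAux

variable {x : LVar} {M : Tm}

theorem F_sim (hMc : ∀ δ, M.lsubst δ = M) (hMg : ∀ σ, M.gsubst σ = M)
    {c c' : Tm × Heap} (hstep : Step c c') :
    ∀ {s hs}, E x M s c.1 → EH x M hs c.2 →
    ∃ s' hs', StepStar (s, hs) (s', hs') ∧ E x M s' c'.1 ∧ EH x M hs' c'.2 := by
  induction hstep with
  | @beta y B V hp hV =>
    intro s hs hE hh
    cases hE with
    | exp =>
      refine ⟨M, hs, .refl, ?_, hh⟩
      simp only [hMc]
      exact E_refl x M M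
    | app h1 h2 =>
      cases h1 with
      | lam h0 =>
        rename_i s2 B0
        have hv2 : IsValue s2 := E_value_right h2 hV
        refine ⟨B0.lsubst [(y, s2)], hs, .single (.beta hv2), ?_, hh⟩
        exact E_lsubst hMc B0 h0 (.cons h2 .nil)
  | @arith op n m hp =>
    intro s hs hE hh
    cases hE with
    | arith h1 h2 =>
      cases h1 with
      | int =>
        cases h2 with
        | int => exact ⟨.int (op n m), hs, .single .arith, .int, hh⟩
  | @iteT n M2 N2 hp hn =>
    intro s hs hE hh
    cases hE with
    | ite h1 h2 h3 =>
      cases h1 with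
      | int => exact ⟨_, hs, .single (.iteT hn), h2, hh⟩
  | @iteF M2 N2 hp =>
    intro s hs hE hh
    cases hE with
    | ite h1 h2 h3 =>
      cases h1 with
      | int => exact ⟨_, hs, .single .iteF, h3, hh⟩
  | @ref V l hp hV hl =>
    intro s hs hE hh
    cases hE with
    | ref h1 =>
      have hv : IsValue _ := E_value_right h1 hV
      rcases hh l with ⟨h1n, h2n⟩ | ⟨W, W', hW, hW', _⟩
      · exact ⟨.loc l, _, .single (.ref hv h1n), .loc, EH_update hh h1 l⟩
      · have hW2 : hp l = some W' := hW'
        rw [hl] at hW2; cases hW2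
  | @deref l V hp hl =>
    intro s hs hE hh
    cases hE with
    | deref h1 =>
      cases h1 with
      | loc =>
        rcases hh l with ⟨h1n, h2n⟩ | ⟨W, W', hW, hW', hE'⟩
        · have h2n' : hp l = none := h2n
          rw [hl] at h2n'; cases h2n'
        · have hW2 : hp l = some W' := hW'
          rw [hl] at hW2
          injection hW2 with hW2
          subst hW2
          exact ⟨W, hs, .single (.deref hW), hE', hh⟩
  | @assign l V hp hV hl =>
    intro s hs hE hh
    cases hE with
    | assign h1 h2 =>
      cases h1 with
      | loc =>
        have hv2 : IsValue _ := E_value_right h2 hV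
        rcases hh l with ⟨h1n, h2n⟩ | ⟨W, W', hW, hW', _⟩
        · have h2n' : hp l = none := h2n
          rw [h2n'] at hl; cases hl
        · exact ⟨.unit, _, .single (.assign hv2 (by rw [hW]; rfl)), .unit,
            EH_update hh h2 l⟩
  | @rec' f y B V hp hV =>
    intro s hs hE hh
    cases hE with
    | app h1 h2 =>
      cases h1 with
      | rec' h0 =>
        rename_i s2 B0
        have hv2 : IsValue s2 := E_value_right h2 hV
        refine ⟨B0.lsubst [(y, s2), (f, .rec' f y B0)], hs, .single (.rec' hv2), ?_, hh⟩
        exact E_lsubst hMc B0 h0 (.cons h2 (.cons (E.rec' h0) .nil))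
  | @letbox u M1 M2 hp =>
    intro s hs hE hh
    cases hE with
    | letbox h1 h2 =>
      cases h1 with
      | box h0 =>
        rename_i P
        refine ⟨_, hs, .single .letbox, ?_, hh⟩
        exact E_gsubst hMc hMg _ h2 (.cons h0 .nil)
  | @ktx K t1 t2 h1 h2 wf hne hstep0 ih =>
    intro s hs hE hh
    obtain ⟨K', s1, hwf', rfl, hE1, hcong⟩ := E_decomp_right hMc wf hE hstep0
    obtain ⟨s1', hs', hsteps, hE2, hh2⟩ := ih hE1 hh
    exact ⟨K'.plug s1', hs', star_lift hwf' hsteps, hcong _ _ hE2, hh2⟩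

end BetaExpAux
namespace BetaExpAux

variable {x : LVar} {M : Tm}

theorem B_sim (hMc : ∀ δ, M.lsubst δ = M) (hMg : ∀ σ, M.gsubst σ = M)
    {c c' : Tm × Heap} (hstep : Step c c') :
    ∀ {t ht}, E x M c.1 t → EH x M c.2 ht →
    ∃ t' ht', StepStar (t, ht) (t', ht') ∧ E x M c'.1 t' ∧ EH x M c'.2 ht' := by
  induction hstep with
  | @beta y B V hp hV =>
    intro t ht hE hh
    obtain ⟨t1, t2, hpre, h1, h2⟩ := E_app_inv hMc hE ht
    obtain ⟨t1s, hs1, hval1, hE1⟩ := E_value_steps hMc h1 IsValue.lam ht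
    cases hE1 with
    | exp => cases hval1
    | lam h0 =>
      rename_i B'
      obtain ⟨t2s, hs2, hval2, hE2⟩ := E_value_steps hMc h2 hV ht
      refine ⟨B'.lsubst [(y, t2s)], ht, ?_, ?_, hh⟩
      · exact hpre.trans ((star_lift (ECtxWf.appL (N := t2) ECtxWf.hole) hs1).trans
          ((star_lift (ECtxWf.appR hval1 ECtxWf.hole) hs2).trans
            (.single (Step.beta hval2))))
      · exact E_lsubst hMc B h0 (.cons hE2 .nil)
  | @arith op n m hp =>
    intro t ht hE hh
    obtain ⟨t1, t2, hpre, h1, h2⟩ := E_arith_inv hMc hE ht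
    obtain ⟨t1s, hs1, hval1, hE1⟩ := E_value_steps hMc h1 IsValue.int ht
    cases hE1 with
    | exp => cases hval1
    | int =>
      obtain ⟨t2s, hs2, hval2, hE2⟩ := E_value_steps hMc h2 IsValue.int ht
      cases hE2 with
      | exp => cases hval2
      | int =>
        refine ⟨.int (op n m), ht, ?_, .int, hh⟩
        exact hpre.trans ((star_lift (ECtxWf.arithL (N := t2) ECtxWf.hole) hs1).trans
          ((star_lift (ECtxWf.arithR hval1 ECtxWf.hole) hs2).trans
            (.single Step.arith)))
  | @iteT n M2 N2 hp hn =>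
    intro t ht hE hh
    obtain ⟨t1, t2, t3, hpre, h1, h2, h3⟩ := E_ite_inv hMc hE ht
    obtain ⟨t1s, hs1, hval1, hE1⟩ := E_value_steps hMc h1 IsValue.int ht
    cases hE1 with
    | exp => cases hval1
    | int =>
      refine ⟨t2, ht, ?_, h2, hh⟩
      exact hpre.trans ((star_lift (ECtxWf.ite (N := t2) (P := t3) ECtxWf.hole) hs1).trans
        (.single (Step.iteT hn)))
  | @iteF M2 N2 hp =>
    intro t ht hE hh
    obtain ⟨t1, t2, t3, hpre, h1, h2, h3⟩ := E_ite_inv hMc hE ht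
    obtain ⟨t1s, hs1, hval1, hE1⟩ := E_value_steps hMc h1 IsValue.int ht
    cases hE1 with
    | exp => cases hval1
    | int =>
      refine ⟨t3, ht, ?_, h3, hh⟩
      exact hpre.trans ((star_lift (ECtxWf.ite (N := t2) (P := t3) ECtxWf.hole) hs1).trans
        (.single Step.iteF))
  | @ref V l hp hV hl =>
    intro t ht hE hh
    obtain ⟨t1, hpre, h1⟩ := E_ref_inv hMc hE ht
    obtain ⟨t1s, hs1, hval1, hE1⟩ := E_value_steps hMc h1 hV ht
    have htl : ht l = none := by
      rcases hh l with ⟨h1n, h2n⟩ | ⟨W, W', hW, hW', _⟩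
      · exact h2n
      · have hW2 : hp l = some W := hW
        rw [hl] at hW2; cases hW2
    refine ⟨.loc l, hupdate ht l t1s, ?_, .loc, EH_update hh hE1 l⟩
    exact hpre.trans ((star_lift (ECtxWf.ref ECtxWf.hole) hs1).trans
      (.single (Step.ref hval1 htl)))
  | @deref l V hp hl =>
    intro t ht hE hh
    obtain ⟨t1, hpre, h1⟩ := E_deref_inv hMc hE ht
    obtain ⟨t1s, hs1, hval1, hE1⟩ := E_value_steps hMc h1 IsValue.loc ht
    cases hE1 with
    | exp => cases hval1
    | loc =>
      rcases hh l with ⟨h1n, h2n⟩ | ⟨W, W', hW, hW', hE'⟩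
      · have h1n' : hp l = none := h1n
        rw [hl] at h1n'; cases h1n'
      · have hW2 : hp l = some W := hW
        rw [hl] at hW2
        injection hW2 with hW2
        subst hW2
        refine ⟨W', ht, ?_, hE', hh⟩
        exact hpre.trans ((star_lift (ECtxWf.deref ECtxWf.hole) hs1).trans
          (.single (Step.deref hW')))
  | @assign l V hp hV hl =>
    intro t ht hE hh
    obtain ⟨t1, t2, hpre, h1, h2⟩ := E_assign_inv hMc hE ht
    obtain ⟨t1s, hs1, hval1, hE1⟩ := E_value_steps hMc h1 IsValue.loc ht
    cases hE1 with
    | exp => cases hval1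
    | loc =>
      obtain ⟨t2s, hs2, hval2, hE2⟩ := E_value_steps hMc h2 hV ht
      have htl : (ht l).isSome := by
        rcases hh l with ⟨h1n, h2n⟩ | ⟨W, W', hW, hW', _⟩
        · have h1n' : hp l = none := h1n
          rw [h1n'] at hl; cases hl
        · rw [hW']; rfl
      refine ⟨.unit, hupdate ht l t2s, ?_, .unit, EH_update hh hE2 l⟩
      exact hpre.trans ((star_lift (ECtxWf.assignL (N := t2) ECtxWf.hole) hs1).trans
        ((star_lift (ECtxWf.assignR hval1 ECtxWf.hole) hs2).trans
          (.single (Step.assign hval2 htl))))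
  | @rec' f y B V hp hV =>
    intro t ht hE hh
    obtain ⟨t1, t2, hpre, h1, h2⟩ := E_app_inv hMc hE ht
    obtain ⟨t1s, hs1, hval1, hE1⟩ := E_value_steps hMc h1 IsValue.rec' ht
    cases hE1 with
    | exp => cases hval1
    | rec' h0 =>
      rename_i B'
      obtain ⟨t2s, hs2, hval2, hE2⟩ := E_value_steps hMc h2 hV ht
      refine ⟨B'.lsubst [(y, t2s), (f, .rec' f y B')], ht, ?_, ?_, hh⟩
      · exact hpre.trans ((star_lift (ECtxWf.appL (N := t2) ECtxWf.hole) hs1).trans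
          ((star_lift (ECtxWf.appR hval1 ECtxWf.hole) hs2).trans
            (.single (Step.rec' hval2))))
      · exact E_lsubst hMc B h0 (.cons hE2 (.cons (E.rec' h0) .nil))
  | @letbox u M1 M2 hp =>
    intro t ht hE hh
    obtain ⟨t1, t2, hpre, h1, h2⟩ := E_letbox_inv hMc hE ht
    obtain ⟨t1s, hs1, hval1, hE1⟩ := E_value_steps hMc h1 IsValue.box ht
    cases hE1 with
    | exp => cases hval1
    | box h0 =>
      rename_i P'
      refine ⟨t2.gsubst [(u, P')], ht, ?_, ?_, hh⟩
      · exact hpre.trans ((star_lift (ECtxWf.letboxL (u := u) (N := t2) ECtxWf.hole) hs1).trans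
          (.single Step.letbox))
      · exact E_gsubst hMc hMg _ h2 (.cons h0 .nil)
  | @ktx K s1 s2 h1 h2 wf hne hstep0 ih =>
    intro t ht hE hh
    obtain ⟨K', t1, hwf', hpre, hE1, hcong⟩ := E_decomp_left hMc wf hE ht
    obtain ⟨t1', ht', hsteps, hE2, hh2⟩ := ih hE1 hh
    exact ⟨K'.plug t1', ht', hpre.trans (star_lift hwf' hsteps), hcong _ _ hE2, hh2⟩

end BetaExpAux
namespace BetaExpAux

variable {x : LVar} {M : Tm}

theorem terminates_fwd (hMc : ∀ δ, M.lsubst δ = M) (hMg : ∀ σ, M.gsubst σ = M) :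
    ∀ {c : Tm × Heap} {V h'}, StepStar c (V, h') → IsValue V →
    ∀ {s hs}, E x M s c.1 → EH x M hs c.2 → Terminates (s, hs) := by
  intro c V h' hsteps hV
  induction hsteps using Relation.ReflTransGen.head_induction_on with
  | refl => intro s hs hE hh; exact ⟨s, hs, E_value_right hE hV, .refl⟩
  | head hstep _ ih =>
    intro s hs hE hh
    obtain ⟨s', hs', hpre, hE', hh'⟩ := F_sim hMc hMg hstep hE hh
    obtain ⟨V2, h2, hV2, hrest⟩ := ih hE' hh'
    exact ⟨V2, h2, hV2, hpre.trans hrest⟩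

theorem terminates_fwd' (hMc : ∀ δ, M.lsubst δ = M) (hMg : ∀ σ, M.gsubst σ = M)
    {s t hs ht} (hE : E x M s t) (hh : EH x M hs ht) (h : Terminates (t, ht)) :
    Terminates (s, hs) := by
  obtain ⟨V, h', hV, hsteps⟩ := h
  exact terminates_fwd hMc hMg hsteps hV hE hh

theorem terminates_back (hMc : ∀ δ, M.lsubst δ = M) (hMg : ∀ σ, M.gsubst σ = M) :
    ∀ {c : Tm × Heap} {V h'}, StepStar c (V, h') → IsValue V →
    ∀ {t ht}, E x M c.1 t → EH x M c.2 ht → Terminates (t, ht) := by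
  intro c V h' hsteps hV
  induction hsteps using Relation.ReflTransGen.head_induction_on with
  | refl =>
    intro t ht hE hh
    obtain ⟨ts, hsteps', hval, _⟩ := E_value_steps hMc hE hV ht
    exact ⟨ts, ht, hval, hsteps'⟩
  | head hstep _ ih =>
    intro t ht hE hh
    obtain ⟨t', ht', hpre, hE', hh'⟩ := B_sim hMc hMg hstep hE hh
    obtain ⟨V2, h2, hV2, hrest⟩ := ih hE' hh'
    exact ⟨V2, h2, hV2, hpre.trans hrest⟩

theorem terminates_back' (hMc : ∀ δ, M.lsubst δ = M) (hMg : ∀ σ, M.gsubst σ = M)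
    {s t hs ht} (hE : E x M s t) (hh : EH x M hs ht) (h : Terminates (s, hs)) :
    Terminates (t, ht) := by
  obtain ⟨V, h', hV, hsteps⟩ := h
  exact terminates_back hMc hMg hsteps hV hE hh

end BetaExpAux
/-- **β-expansion with unit**: for a closed box-free term `M` (with `x` not
    free in `M`), `(λx.M) ()` is contextually equivalent to `M`; more
    strongly, plugging either term for a placeholder `z` in any closed term
    preserves termination in both directions. -/
theorem beta_expansion_unit {Sg : SCtx} {i : Nat} {M : Tm} {T : Ty} {x : LVar}
    (hM : Typing Sg [] [] i M T)
    (hbf : BoxFree M)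
    (hx : M.lsubst [(x, .unit)] = M) :
    CtxLe Sg [] [] i T (.app (.lam x M) .unit) M ∧
    CtxLe Sg [] [] i T M (.app (.lam x M) .unit) ∧
    (∀ (Sg' : SCtx) (i' : Nat) (T' : Ty) (N : Tm) (z : LVar) (h : Heap),
      SCtxLe Sg Sg' →
      Typing Sg' [] [(z, T)] i' N T' →
      HeapTyped Sg' [] [] h →
      (Terminates (N.lsubst [(z, .app (.lam x M) .unit)], h) ↔
        Terminates (N.lsubst [(z, M)], h))) := by
  have hMc : ∀ δ, M.lsubst δ = M := fun δ =>
    BetaExpAux.lsubst_closed hM δ (fun p _ => rfl)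
  have hMg : ∀ σ, M.gsubst σ = M := fun σ =>
    BetaExpAux.gsubst_closed M hM σ (fun p _ => rfl)
  refine ⟨?_, ?_, ?_⟩
  · intro Sg' C i' T' h _ _ _ hterm
    exact BetaExpAux.terminates_fwd' hMc hMg
      (BetaExpAux.E_ctxplug C BetaExpAux.E.exp) (BetaExpAux.EH_refl x M h) hterm
  · intro Sg' C i' T' h _ _ _ hterm
    exact BetaExpAux.terminates_back' hMc hMg
      (BetaExpAux.E_ctxplug C BetaExpAux.E.exp) (BetaExpAux.EH_refl x M h) hterm
  · intro Sg' i' T' N z h _ _ _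
    have hE : BetaExpAux.E x M (N.lsubst [(z, M)])
        (N.lsubst [(z, .app (.lam x M) .unit)]) :=
      BetaExpAux.E_lsubst hMc N (BetaExpAux.E_refl x M N)
        (.cons BetaExpAux.E.exp .nil)
    constructor
    · intro ht
      exact BetaExpAux.terminates_fwd' hMc hMg hE (BetaExpAux.EH_refl x M h) ht
    · intro ht
      exact BetaExpAux.terminates_back' hMc hMg hE (BetaExpAux.EH_refl x M h) ht
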